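/- Define Q'_J = {(a,b,c) ∈ W^J_max × W_J × W^J : a ≤ cb} with order (a',b',c') ≤ (a,b,c) iff there exist u'₁, u'₂ ∈ W_J with u'₁u'₂ = b', ℓ(u'₁)+ℓ(u'₂) = ℓ(b'), and ab⁻¹ ≤ a'(u'₂)⁻¹ ≤ c'u'₁ ≤ c. Define Q_J = {(x,y) ∈ W^J × W : y ≤ x} with (x',y') ⪯ (x,y) iff there exists u ∈ W_J with x'u ≤ x and y'u ≥ y. Then the map h: Q_J → Q'_J, (x,y) ↦ (max(yW_J), y⁻¹max(yW_J), x) is an order-preserving bijection. -/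

import Mathlib

/-- The Bruhat order on a Coxeter group, defined via the subword property:
`u ≤ v` iff some reduced word for `v` contains a subword whose product is `u`. -/
def bruhatLE {B W : Type*} [Group W] {M : CoxeterMatrix B} (cs : CoxeterSystem M W)
    (u v : W) : Prop :=
  ∃ l : List B, cs.IsReduced l ∧ cs.wordProd l = v ∧
    ∃ l' : List B, l'.Sublist l ∧ cs.wordProd l' = u

/-- `x` is a minimal length representative of its coset `x W_J`. -/
def isMinRep {B W : Type*} [Group W] {M : CoxeterMatrix B} (cs : CoxeterSystem M W)
    (J : Set B) (x : W) : Prop :=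
  ∀ u ∈ Subgroup.closure (cs.simple '' J), cs.length x ≤ cs.length (x * u)

/-- `x` is a maximal length representative of its coset `x W_J`. -/
def isMaxRep {B W : Type*} [Group W] {M : CoxeterMatrix B} (cs : CoxeterSystem M W)
    (J : Set B) (x : W) : Prop :=
  ∀ u ∈ Subgroup.closure (cs.simple '' J), cs.length (x * u) ≤ cs.length x

/-- `m` is the Bruhat-greatest element of the set `S`. -/
def isGreatestB {B W : Type*} [Group W] {M : CoxeterMatrix B} (cs : CoxeterSystem M W)
    (S : Set W) (m : W) : Prop :=
  m ∈ S ∧ ∀ z ∈ S, bruhatLE cs z m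

/-- The poset `Q_J = {(x,y) ∈ W^J × W : y ≤ x}`. -/
def QJset {B W : Type*} [Group W] {M : CoxeterMatrix B} (cs : CoxeterSystem M W)
    (J : Set B) : Set (W × W) :=
  {p | isMinRep cs J p.1 ∧ bruhatLE cs p.2 p.1}

/-- The order `⪯` on `Q_J`: `(x',y') ⪯ (x,y)` iff `∃ u ∈ W_J, x'u ≤ x ∧ y'u ≥ y`. -/
def preceq {B W : Type*} [Group W] {M : CoxeterMatrix B} (cs : CoxeterSystem M W)
    (J : Set B) (p q : W × W) : Prop :=
  ∃ u ∈ Subgroup.closure (cs.simple '' J),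
    bruhatLE cs (p.1 * u) q.1 ∧ bruhatLE cs q.2 (p.2 * u)

/-- Rietsch's poset `Q'_J = {(a,b,c) ∈ W^J_max × W_J × W^J : a ≤ cb}`. -/
def Q'Jset {B W : Type*} [Group W] {M : CoxeterMatrix B} (cs : CoxeterSystem M W)
    (J : Set B) : Set (W × W × W) :=
  {q | isMaxRep cs J q.1 ∧ q.2.1 ∈ Subgroup.closure (cs.simple '' J) ∧
    isMinRep cs J q.2.2 ∧ bruhatLE cs q.1 (q.2.2 * q.2.1)}

/-- Rietsch's order on `Q'_J`: `(a',b',c') ≤ (a,b,c)` iff there are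
`u'₁, u'₂ ∈ W_J` with `u'₁u'₂ = b'`, `ℓ(u'₁) + ℓ(u'₂) = ℓ(b')` and
`ab⁻¹ ≤ a'(u'₂)⁻¹ ≤ c'u'₁ ≤ c`. -/
def leQ' {B W : Type*} [Group W] {M : CoxeterMatrix B} (cs : CoxeterSystem M W)
    (J : Set B) (q' q : W × W × W) : Prop :=
  ∃ u1 ∈ Subgroup.closure (cs.simple '' J), ∃ u2 ∈ Subgroup.closure (cs.simple '' J),
    u1 * u2 = q'.2.1 ∧ cs.length u1 + cs.length u2 = cs.length q'.2.1 ∧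
    bruhatLE cs (q.1 * q.2.1⁻¹) (q'.1 * u2⁻¹) ∧
    bruhatLE cs (q'.1 * u2⁻¹) (q'.2.2 * u1) ∧
    bruhatLE cs (q'.2.2 * u1) q.2.2

/-!
The inverse of `h` is `(a, b, c) ↦ (c, a * b⁻¹)`. Everything rests on two length formulas for
`u ∈ W_J`, namely `ℓ (x * u) = ℓ x + ℓ u` for `x ∈ W^J` and `ℓ (a * u) + ℓ u = ℓ a` for
`a ∈ W^J_max`, and on the fact that Bruhat order survives multiplication without cancellation:
`y ≤ x` gives `y * u ≤ x * u` when `ℓ (x * u) = ℓ x + ℓ u`, and `u ≤ v` gives `u * w ≤ v * w`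
when both products lose exactly `ℓ w`. Thus `y ≤ x` gives `max (y W_J) ≤ x * y⁻¹ * max (y W_J)`,
and `a ≤ c * b` gives `a * b⁻¹ ≤ c`. For monotonicity, from `x' * u ≤ x` and `y ≤ y' * u` one
extracts a subword `u₁ ≤ u` with `ℓ (y' * u₁) = ℓ y' + ℓ u₁` and `y' * u ≤ y' * u₁`; then
`b' = u₁ * (u₁⁻¹ * b')` is the required length-additive factorisation, because `a' = y' * b'` is
maximal in its coset.

The Bruhat order facts come from identifying the subword order with the order generated by
`u < u * t` for reflections `t` with `ℓ u < ℓ (u * t)`, using the strong exchange condition,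
which in turn comes from Tits' reflection cocycle.
-/

section ConjParity

variable {G : Type*} [Group G]

theorem mul_mul_inv_eq_iff_of_inv_mul_mul_eq {x t y z : G} (h : x⁻¹ * y * x = z) :
    x * t * x⁻¹ = y ↔ t = z := by
  subst h; constructor <;> rintro rfl <;> group

variable [DecidableEq G]

def conjParityPerm (s : G) : Equiv.Perm (G × ZMod 2) where
  toFun p := (s * p.1 * s⁻¹, p.2 + if p.1 = s then 1 else 0)
  invFun p := (s⁻¹ * p.1 * s, p.2 + if p.1 = s then 1 else 0)
  left_inv := by
    rintro ⟨t, ε⟩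
    have hconj : s * t * s⁻¹ = s ↔ t = s := mul_mul_inv_eq_iff_of_inv_mul_mul_eq (by group)
    ext
    · simp [mul_assoc]
    · simp only [hconj, add_assoc, CharTwo.add_self_eq_zero, add_zero]
  right_inv := by
    rintro ⟨t, ε⟩
    have hconj : s⁻¹ * t * s⁻¹⁻¹ = s ↔ t = s := mul_mul_inv_eq_iff_of_inv_mul_mul_eq (by group)
    rw [inv_inv] at hconj
    ext
    · simp [mul_assoc]
    · simp only [hconj, add_assoc, CharTwo.add_self_eq_zero, add_zero]

theorem conjParityPerm_apply (s t : G) (ε : ZMod 2) :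
    conjParityPerm s (t, ε) = (s * t * s⁻¹, ε + if t = s then 1 else 0) := rfl

theorem conjParityPerm_mul_pow_apply {a b : G} (ha : a * a = 1) (hb : b * b = 1) (k : ℕ)
    (t : G) (ε : ZMod 2) :
    ((conjParityPerm a * conjParityPerm b) ^ k) (t, ε) =
      ((a * b) ^ k * t * ((a * b) ^ k)⁻¹,
        ε + ∑ q ∈ Finset.range (2 * k), if t = b * (a * b) ^ q then 1 else 0) := by
  have hb' : b⁻¹ = b := inv_eq_of_mul_eq_one_right hb
  have hba : (a * b)⁻¹ * b = b * (a * b) := by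
    rw [mul_inv_rev, inv_eq_of_mul_eq_one_right ha, hb', mul_assoc]
  have hshift (q : ℕ) : (a * b)⁻¹ * (b * (a * b) ^ q) * (a * b) = b * (a * b) ^ (q + 1 + 1) :=
    calc _ = ((a * b)⁻¹ * b) * ((a * b) ^ q * (a * b)) := by group
      _ = b * (a * b) * (a * b) ^ (q + 1) := by rw [hba, pow_succ]
      _ = b * (a * b) ^ (q + 1 + 1) := by rw [mul_assoc, ← pow_succ']
  have hb_conj : b⁻¹ * a * b = b * (a * b) ^ 1 := by rw [hb', pow_one, mul_assoc]
  induction k generalizing t ε with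
  | zero => simp
  | succ k ih =>
    rw [pow_succ, Equiv.Perm.mul_apply, Equiv.Perm.mul_apply, conjParityPerm_apply,
      conjParityPerm_apply, ih]
    ext
    · simp only [pow_succ, mul_inv_rev, mul_assoc]
    · have hconj : a * (b * t * b⁻¹) * a⁻¹ = (a * b) * t * (a * b)⁻¹ := by group
      simp only [hconj, mul_mul_inv_eq_iff_of_inv_mul_mul_eq (hshift _),
        mul_mul_inv_eq_iff_of_inv_mul_mul_eq hb_conj]
      rw [show 2 * (k + 1) = 2 * k + 1 + 1 by ring, Finset.sum_range_succ',
        Finset.sum_range_succ']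
      simp only [zero_add, pow_zero, mul_one]
      ring

theorem conjParityPerm_mul_pow_eq_one {a b : G} (ha : a * a = 1) (hb : b * b = 1) {m : ℕ}
    (hm : (a * b) ^ m = 1) : (conjParityPerm a * conjParityPerm b) ^ m = 1 := by
  ext1 ⟨t, ε⟩
  have hperiodic (q : ℕ) : b * (a * b) ^ (m + q) = b * (a * b) ^ q := by
    rw [pow_add, hm, one_mul]
  rw [conjParityPerm_mul_pow_apply ha hb, hm, two_mul, Finset.sum_range_add]
  simp only [hperiodic, CharTwo.add_self_eq_zero]
  simp

end ConjParity

namespace CoxeterSystem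

variable {B W : Type*} [Group W] {M : CoxeterMatrix B} (cs : CoxeterSystem M W)

local prefix:100 "s " => cs.simple
local prefix:100 "π " => cs.wordProd
local prefix:100 "ℓ " => cs.length
local prefix:100 "ris " => cs.rightInvSeq

section ReflectionCocycle

variable [DecidableEq W]

theorem isLiftable_conjParityPerm : M.IsLiftable (fun i ↦ conjParityPerm (s i)) := fun i j ↦
  conjParityPerm_mul_pow_eq_one (cs.simple_mul_simple_self i) (cs.simple_mul_simple_self j)
    (cs.simple_mul_simple_pow i j)

/-- Tits' action of `W` on `W × ZMod 2`. Along a word `ω` the parity picked up at `t` counts the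
occurrences of `t` in the right inversion sequence of `ω` (`reflectionRep_wordProd`), so this
count modulo 2 depends only on `π ω`. -/
def reflectionRep : W →* Equiv.Perm (W × ZMod 2) :=
  cs.lift ⟨_, cs.isLiftable_conjParityPerm⟩

def reflectionCocycle (w t : W) : ZMod 2 := (cs.reflectionRep w (t, 0)).2

theorem reflectionRep_wordProd (ω : List B) (t : W) (ε : ZMod 2) :
    cs.reflectionRep (π ω) (t, ε) = (π ω * t * (π ω)⁻¹, ε + (ris ω).count t) := by
  induction ω generalizing ε with
  | nil => simp
  | cons i ω ih =>
    have hconj : π ω * t * (π ω)⁻¹ = s i ↔ (π ω)⁻¹ * s i * π ω = t := by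
      rw [mul_mul_inv_eq_iff_of_inv_mul_mul_eq rfl, eq_comm]
    rw [cs.wordProd_cons, map_mul, Equiv.Perm.mul_apply, ih, reflectionRep,
      cs.lift_apply_simple, conjParityPerm_apply, rightInvSeq, List.count_cons]
    ext
    · simp only [mul_inv_rev, cs.inv_simple, mul_assoc]
    · simp only [hconj, beq_iff_eq]
      push_cast
      ring

theorem reflectionRep_apply (w t : W) (ε : ZMod 2) :
    cs.reflectionRep w (t, ε) = (w * t * w⁻¹, ε + cs.reflectionCocycle w t) := by
  obtain ⟨ω, rfl⟩ := cs.wordProd_surjective w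
  rw [reflectionCocycle, reflectionRep_wordProd, reflectionRep_wordProd, zero_add]

theorem reflectionCocycle_wordProd (ω : List B) (t : W) :
    cs.reflectionCocycle (π ω) t = (ris ω).count t := by
  rw [reflectionCocycle, reflectionRep_wordProd, zero_add]

theorem reflectionCocycle_mul (x v t : W) :
    cs.reflectionCocycle (x * v) t =
      cs.reflectionCocycle v t + cs.reflectionCocycle x (v * t * v⁻¹) := by
  have h := congrArg Prod.snd (cs.reflectionRep_apply (x * v) t 0)
  rw [map_mul, Equiv.Perm.mul_apply, reflectionRep_apply, reflectionRep_apply] at h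
  simpa using h.symm

@[simp]
theorem reflectionCocycle_one (t : W) : cs.reflectionCocycle 1 t = 0 := by
  simpa using cs.reflectionCocycle_wordProd [] t

theorem reflectionCocycle_simple (i : B) (t : W) :
    cs.reflectionCocycle (s i) t = if t = s i then 1 else 0 := by
  rw [reflectionCocycle, reflectionRep, cs.lift_apply_simple, conjParityPerm_apply, zero_add]

theorem reflectionCocycle_self {t : W} (ht : cs.IsReflection t) : cs.reflectionCocycle t t = 1 := by
  obtain ⟨u, i, rfl⟩ := ht
  have hconj : u⁻¹ * (u * s i * u⁻¹) * u⁻¹⁻¹ = s i := by group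
  have h1 := cs.reflectionCocycle_mul u u⁻¹ (u * s i * u⁻¹)
  have h2 := cs.reflectionCocycle_mul (u * s i) u⁻¹ (u * s i * u⁻¹)
  have h3 := cs.reflectionCocycle_mul u (s i) (s i)
  rw [mul_inv_cancel, reflectionCocycle_one, hconj] at h1
  rw [hconj] at h2
  rw [reflectionCocycle_simple, if_pos rfl, cs.inv_simple, cs.simple_mul_simple_cancel_right] at h3
  rw [h2, h3, add_left_comm, ← h1, add_zero]

theorem reflectionCocycle_wordProd_eq_one_iff {ω : List B} (hω : cs.IsReduced ω) (t : W) :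
    cs.reflectionCocycle (π ω) t = 1 ↔ t ∈ ris ω := by
  rw [reflectionCocycle_wordProd, hω.nodup_rightInvSeq.count]
  split_ifs with h <;> simp [h]

theorem isRightInversion_iff_reflectionCocycle_eq_one {t : W} (ht : cs.IsReflection t) (w : W) :
    cs.IsRightInversion w t ↔ cs.reflectionCocycle w t = 1 := by
  constructor
  · intro hwt
    obtain ⟨ρ, hρ, hρw⟩ := cs.exists_isReduced (w * t)
    have hnot : t ∉ ris ρ := fun hmem ↦ by
      have := (cs.isRightInversion_of_mem_rightInvSeq hρ hmem).2
      rw [← hρw, mul_assoc, ht.mul_self, mul_one] at this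
      exact absurd hwt.2 this.not_gt
    have h := cs.reflectionCocycle_mul (w * t) t t
    rw [mul_assoc, ht.mul_self, mul_one, cs.reflectionCocycle_self ht, one_mul, ht.inv, hρw,
      reflectionCocycle_wordProd, List.count_eq_zero.mpr hnot] at h
    simpa using h
  · intro h
    obtain ⟨ω, hω, rfl⟩ := cs.exists_isReduced w
    exact cs.isRightInversion_of_mem_rightInvSeq hω
      ((cs.reflectionCocycle_wordProd_eq_one_iff hω t).mp h)

end ReflectionCocycle

theorem mem_rightInvSeq_iff_isRightInversion {ω : List B} (hω : cs.IsReduced ω) (t : W) :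
    t ∈ ris ω ↔ cs.IsRightInversion (π ω) t := by
  classical
  refine ⟨cs.isRightInversion_of_mem_rightInvSeq hω, fun h ↦ ?_⟩
  rw [← cs.reflectionCocycle_wordProd_eq_one_iff hω,
    ← cs.isRightInversion_iff_reflectionCocycle_eq_one h.1]
  exact h

theorem isRightInversion_mul_iff {x v t : W} (ht : cs.IsReflection t)
    (hv : ¬cs.IsRightInversion v t) :
    cs.IsRightInversion (x * v) t ↔ cs.IsRightInversion x (v * t * v⁻¹) := by
  classical
  have hv0 : cs.reflectionCocycle v t = 0 := by
    rw [cs.isRightInversion_iff_reflectionCocycle_eq_one ht] at hv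
    generalize cs.reflectionCocycle v t = e at hv ⊢
    revert e
    decide
  rw [cs.isRightInversion_iff_reflectionCocycle_eq_one ht,
    cs.isRightInversion_iff_reflectionCocycle_eq_one (ht.conj v), reflectionCocycle_mul, hv0,
    zero_add]

theorem eq_simple_of_isRightInversion_simple {i : B} {t : W} (h : cs.IsRightInversion (s i) t) :
    t = s i := by
  have hred : cs.IsReduced [i] := by simp [IsReduced, length_simple]
  rw [← cs.wordProd_singleton, ← cs.mem_rightInvSeq_iff_isRightInversion hred] at h
  simpa using h

theorem strong_exchange {ω : List B} (hω : cs.IsReduced ω) {t : W}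
    (ht : cs.IsRightInversion (π ω) t) : ∃ j < ω.length, π (ω.eraseIdx j) = π ω * t := by
  obtain ⟨j, hj, rfl⟩ :=
    List.mem_iff_getElem.mp ((cs.mem_rightInvSeq_iff_isRightInversion hω t).mpr ht)
  rw [cs.length_rightInvSeq] at hj
  refine ⟨j, hj, ?_⟩
  rw [← cs.wordProd_mul_getD_rightInvSeq, List.getD_eq_getElem]

theorem exists_reduced_sublist (l : List B) :
    ∃ l', l'.Sublist l ∧ cs.IsReduced l' ∧ π l' = π l := by
  induction l using List.reverseRecOn with
  | nil => exact ⟨[], .slnil, by simp [IsReduced], rfl⟩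
  | append_singleton l i ih =>
    obtain ⟨l', hsub, hred, hprod⟩ := ih
    have hprod_i : π (l ++ [i]) = π l' * s i := by
      rw [wordProd_append, wordProd_singleton, hprod]
    rcases cs.length_mul_simple (π l') i with hup | hdown
    · refine ⟨l' ++ [i], hsub.append (.refl _), ?_, by rw [hprod_i, wordProd_append,
        wordProd_singleton]⟩
      rw [IsReduced, wordProd_append, wordProd_singleton, hup, hred.eq, List.length_append,
        List.length_singleton]
    · obtain ⟨j, hj, hj'⟩ :=
        cs.strong_exchange hred ⟨cs.isReflection_simple i, by omega⟩
      refine ⟨l'.eraseIdx j, (l'.eraseIdx_sublist j).trans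
        (hsub.trans (List.sublist_append_left _ _)), ?_, by rw [hj', hprod_i]⟩
      have h₁ := List.length_eraseIdx_add_one hj
      have h₂ := hred.eq
      rw [IsReduced, hj']
      omega

def IsBruhatStep (u v : W) : Prop := ∃ t, cs.IsReflection t ∧ v = u * t ∧ ℓ u < ℓ v

def BruhatChain : W → W → Prop := Relation.ReflTransGen cs.IsBruhatStep

theorem IsBruhatStep.bruhatChain {cs : CoxeterSystem M W} {u v : W} (h : cs.IsBruhatStep u v) :
    cs.BruhatChain u v :=
  Relation.ReflTransGen.single h

theorem isBruhatStep_mul_left {t w : W} (ht : cs.IsReflection t) (hlt : ℓ w < ℓ (t * w)) :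
    cs.IsBruhatStep w (t * w) :=
  ⟨w⁻¹ * t * w, by simpa using ht.conj w⁻¹, by group, hlt⟩

namespace BruhatChain

variable {cs}

@[refl]
theorem refl (w : W) : cs.BruhatChain w w := Relation.ReflTransGen.refl

theorem trans {u v w : W} (h₁ : cs.BruhatChain u v) (h₂ : cs.BruhatChain v w) :
    cs.BruhatChain u w :=
  Relation.ReflTransGen.trans h₁ h₂

theorem eq_or_length_lt {u v : W} (h : cs.BruhatChain u v) : u = v ∨ ℓ u < ℓ v := by
  induction h with
  | refl => exact .inl rfl
  | tail _ hstep ih =>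
    obtain ⟨t, -, rfl, hlt⟩ := hstep
    rcases ih with rfl | ih
    exacts [.inr hlt, .inr (ih.trans hlt)]

theorem length_le {u v : W} (h : cs.BruhatChain u v) : ℓ u ≤ ℓ v := by
  rcases h.eq_or_length_lt with rfl | h
  exacts [le_rfl, h.le]

theorem antisymm {u v : W} (h₁ : cs.BruhatChain u v) (h₂ : cs.BruhatChain v u) : u = v :=
  h₁.eq_or_length_lt.resolve_right h₂.length_le.not_gt

theorem inv {u v : W} (h : cs.BruhatChain u v) : cs.BruhatChain u⁻¹ v⁻¹ := by
  induction h with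
  | refl => rfl
  | @tail v w _ hstep ih =>
    obtain ⟨t, ht, rfl, hlt⟩ := hstep
    refine ih.tail ⟨v * t * v⁻¹, ht.conj v, by rw [mul_inv_rev, ht.inv]; group, ?_⟩
    rwa [cs.length_inv, cs.length_inv]

theorem simple_mul_or {u v : W} (h : cs.BruhatChain u v) (i : B) :
    cs.BruhatChain (s i * u) v ∨ cs.BruhatChain (s i * u) (s i * v) := by
  induction h with
  | refl => exact .inr (refl _)
  | @tail z v _ hstep ih =>
    obtain ⟨t, ht, rfl, hlt⟩ := hstep
    rcases ih with ih | ih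
    · exact .inl (ih.tail ⟨t, ht, rfl, hlt⟩)
    by_cases hup : ℓ (s i * z) < ℓ (s i * z * t)
    · exact .inr (ih.tail ⟨t, ht, by rw [mul_assoc], by rwa [← mul_assoc]⟩)
    · -- `t` is a right inversion of `s i * z` but not of `z`, which forces `z * t = s i * z`.
      have hdown : cs.IsRightInversion (s i * z) t :=
        ⟨ht, lt_of_le_of_ne (not_lt.mp hup) (ht.length_mul_left_ne _)⟩
      have hzt : z * t * z⁻¹ = s i := cs.eq_simple_of_isRightInversion_simple
        ((cs.isRightInversion_mul_iff ht (fun hz ↦ hlt.not_gt hz.2)).mp hdown)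
      left
      rwa [show z * t = s i * z by rw [← hzt]; group]

theorem simple_mul_of_length_lt {u v : W} (h : cs.BruhatChain u v) {i : B}
    (hv : ℓ v < ℓ (s i * v)) : cs.BruhatChain (s i * u) (s i * v) :=
  (h.simple_mul_or i).elim
    (fun h' ↦ h'.trans (cs.isBruhatStep_mul_left (cs.isReflection_simple i) hv).bruhatChain) id

theorem mul_simple_or {u v : W} (h : cs.BruhatChain u v) (i : B) :
    cs.BruhatChain (u * s i) v ∨ cs.BruhatChain (u * s i) (v * s i) := by
  have hinv (w : W) : (s i * w⁻¹)⁻¹ = w * s i := by rw [mul_inv_rev, inv_inv, cs.inv_simple]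
  refine (h.inv.simple_mul_or i).imp (fun h' ↦ ?_) (fun h' ↦ ?_) <;>
    simpa only [hinv, inv_inv] using h'.inv

theorem mul_simple_of_length_lt {u v : W} (h : cs.BruhatChain u v) {i : B}
    (hv : ℓ v < ℓ (v * s i)) : cs.BruhatChain (u * s i) (v * s i) :=
  (h.mul_simple_or i).elim
    (fun h' ↦ h'.trans (IsBruhatStep.bruhatChain ⟨s i, cs.isReflection_simple i, rfl, hv⟩)) id

theorem mul_simple_of_isRightDescent {u v : W} (h : cs.BruhatChain u v) {i : B}
    (hv : cs.IsRightDescent v i) : cs.BruhatChain (u * s i) v :=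
  (h.mul_simple_or i).elim id fun h' ↦ h'.trans
    (IsBruhatStep.bruhatChain ⟨s i, cs.isReflection_simple i, by simp [mul_assoc], hv⟩)

end BruhatChain

theorem bruhatChain_wordProd_of_sublist {ω l : List B} (hω : cs.IsReduced ω)
    (hl : l.Sublist ω) : cs.BruhatChain (π l) (π ω) := by
  induction ω generalizing l with
  | nil => rw [List.sublist_nil.mp hl]
  | cons i ω ih =>
    have hω' : cs.IsReduced ω := by simpa using hω.drop 1
    have hasc : ℓ (π ω) < ℓ (s i * π ω) := by
      rw [← wordProd_cons, hω.eq, hω'.eq, List.length_cons]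
      exact Nat.lt_succ_self _
    rcases List.sublist_cons_iff.mp hl with hl | ⟨r, rfl, hr⟩
    · rw [wordProd_cons]
      exact (ih hω' hl).trans (cs.isBruhatStep_mul_left (cs.isReflection_simple i) hasc).bruhatChain
    · rw [wordProd_cons, wordProd_cons]
      exact (ih hω' hr).simple_mul_of_length_lt hasc

theorem one_bruhatChain (w : W) : cs.BruhatChain 1 w := by
  obtain ⟨ω, hω, rfl⟩ := cs.exists_isReduced w
  simpa using cs.bruhatChain_wordProd_of_sublist hω (List.nil_sublist ω)

theorem isReduced_append {ρ μ : List B} (hρ : cs.IsReduced ρ) (hμ : cs.IsReduced μ)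
    (h : ℓ (π ρ * π μ) = ℓ (π ρ) + ℓ (π μ)) : cs.IsReduced (ρ ++ μ) := by
  rw [IsReduced, wordProd_append, h, hρ.eq, hμ.eq, List.length_append]

namespace BruhatChain

variable {cs}

theorem exists_sublist {u v : W} (h : cs.BruhatChain u v) {ω : List B}
    (hω : cs.IsReduced ω) (hv : π ω = v) : ∃ l, l.Sublist ω ∧ cs.IsReduced l ∧ π l = u := by
  induction h using Relation.ReflTransGen.head_induction_on with
  | refl => exact ⟨ω, .refl ω, hω, hv⟩
  | @head a c hstep _ ih =>
    obtain ⟨l, hl, hred, rfl⟩ := ih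
    obtain ⟨t, ht, hc, hlt⟩ := hstep
    have ha : a = π l * t := by rw [hc, mul_assoc, ht.mul_self, mul_one]
    obtain ⟨j, -, hj⟩ := cs.strong_exchange hred ⟨ht, by rwa [← ha]⟩
    obtain ⟨l', hl', hred', hprod⟩ := cs.exists_reduced_sublist (l.eraseIdx j)
    exact ⟨l', hl'.trans ((l.eraseIdx_sublist j).trans hl), hred', by rw [hprod, hj, ha]⟩

theorem mul_simple_of_isRightDescent_of_isRightDescent {u v : W}
    (h : cs.BruhatChain u v) {i : B} (hu : cs.IsRightDescent u i) (hv : cs.IsRightDescent v i) :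
    cs.BruhatChain (u * s i) (v * s i) := by
  obtain ⟨ρ, hρ, hρv⟩ := cs.exists_isReduced (v * s i)
  have hv' : π (ρ ++ [i]) = v := by
    rw [wordProd_append, wordProd_singleton, ← hρv, simple_mul_simple_cancel_right]
  have hred : cs.IsReduced (ρ ++ [i]) := by
    have := cs.length_mul_simple v i
    rw [IsReduced, hv', List.length_append, List.length_singleton, ← hρ.eq, ← hρv]
    unfold IsRightDescent at hv
    omega
  obtain ⟨l, hl, -, rfl⟩ := h.exists_sublist hred hv'
  obtain ⟨l₁, l₂, rfl, hl₁, hl₂⟩ := List.sublist_append_iff.mp hl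
  have h₁ : cs.BruhatChain (π l₁) (v * s i) := hρv ▸ cs.bruhatChain_wordProd_of_sublist hρ hl₁
  rcases List.sublist_singleton.mp hl₂ with rfl | rfl
  · rw [List.append_nil] at hu ⊢
    exact (IsBruhatStep.bruhatChain ⟨s i, cs.isReflection_simple i,
      (simple_mul_simple_cancel_right _ _).symm, hu⟩).trans h₁
  · rwa [wordProd_append, wordProd_singleton, simple_mul_simple_cancel_right]

theorem mul_left_of_length_mul {x u v : W} (h : cs.BruhatChain u v)
    (hxv : ℓ (x * v) = ℓ x + ℓ v) : cs.BruhatChain (x * u) (x * v) := by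
  obtain ⟨ρ, hρ, rfl⟩ := cs.exists_isReduced x
  obtain ⟨μ, hμ, rfl⟩ := cs.exists_isReduced v
  obtain ⟨l, hl, -, rfl⟩ := h.exists_sublist hμ rfl
  simpa only [wordProd_append] using
    cs.bruhatChain_wordProd_of_sublist (cs.isReduced_append hρ hμ hxv) (hl.append_left ρ)

theorem mul_right_of_length_mul {x y u : W} (h : cs.BruhatChain y x)
    (hxu : ℓ (x * u) = ℓ x + ℓ u) : cs.BruhatChain (y * u) (x * u) := by
  have hlen : ℓ (u⁻¹ * x⁻¹) = ℓ u⁻¹ + ℓ x⁻¹ := by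
    rw [← mul_inv_rev, cs.length_inv, cs.length_inv, cs.length_inv, hxu, add_comm]
  simpa only [mul_inv_rev, inv_inv] using (h.inv.mul_left_of_length_mul hlen).inv

theorem mul_right_of_length_mul_add {u v w : W} (h : cs.BruhatChain u v)
    (hu : ℓ (u * w) + ℓ w = ℓ u) (hv : ℓ (v * w) + ℓ w = ℓ v) :
    cs.BruhatChain (u * w) (v * w) := by
  obtain ⟨μ, hμ, rfl⟩ := cs.exists_isReduced w
  rw [hμ.eq] at hu hv
  induction μ generalizing u v with
  | nil => simpa using h
  | cons i μ ih =>
    have hμ' : cs.IsReduced μ := by simpa using hμ.drop 1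
    -- Multiplying by the whole word loses `μ.length + 1`, so each letter is a descent.
    have hdescent {x : W} (hx : ℓ (x * π (i :: μ)) + (i :: μ).length = ℓ x) :
        cs.IsRightDescent x i ∧ ℓ (x * s i * π μ) + μ.length = ℓ (x * s i) := by
      rw [wordProd_cons, ← mul_assoc, List.length_cons] at hx
      have h₁ := cs.length_le_length_mul_add_right (x * s i) (π μ)
      have h₂ := cs.length_mul_simple x i
      rw [hμ'.eq] at h₁
      unfold IsRightDescent
      omega
    obtain ⟨hu₁, hu₂⟩ := hdescent hu
    obtain ⟨hv₁, hv₂⟩ := hdescent hv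
    rw [wordProd_cons, ← mul_assoc, ← mul_assoc]
    exact ih (h.mul_simple_of_isRightDescent_of_isRightDescent hu₁ hv₁) hμ' hu₂ hv₂

end BruhatChain

theorem bruhatLE_iff_bruhatChain {u v : W} : bruhatLE cs u v ↔ cs.BruhatChain u v := by
  constructor
  · rintro ⟨ω, hω, rfl, l, hl, rfl⟩
    exact cs.bruhatChain_wordProd_of_sublist hω hl
  · intro h
    obtain ⟨ω, hω, rfl⟩ := cs.exists_isReduced v
    obtain ⟨l, hl, -, rfl⟩ := h.exists_sublist hω rfl
    exact ⟨ω, hω, rfl, l, hl, rfl⟩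

theorem bruhatChain_mul_of_length_mul {x y : W} (h : ℓ (x * y) = ℓ x + ℓ y) :
    cs.BruhatChain x (x * y) := by
  simpa using (cs.one_bruhatChain y).mul_left_of_length_mul h

theorem exists_sublist_length_mul_eq_and_bruhatChain (w : W) (μ : List B) :
    ∃ μ₁, μ₁.Sublist μ ∧ ℓ (w * π μ₁) = ℓ w + ℓ (π μ₁) ∧
      cs.BruhatChain (w * π μ) (w * π μ₁) := by
  induction μ using List.reverseRecOn with
  | nil => exact ⟨[], .slnil, by simp, by rfl⟩
  | append_singleton μ i ih =>
    obtain ⟨μ₁, hsub, hlen, hle⟩ := ih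
    rw [wordProd_append, wordProd_singleton, ← mul_assoc]
    rcases cs.length_mul_simple (w * π μ₁) i with hup | hdown
    · refine ⟨μ₁ ++ [i], hsub.append (.refl _), ?_, ?_⟩ <;>
        rw [wordProd_append, wordProd_singleton, ← mul_assoc]
      · have h₁ := cs.length_mul_le w (π μ₁ * s i)
        have h₂ := cs.length_mul_le (π μ₁) (s i)
        rw [← mul_assoc] at h₁
        rw [length_simple] at h₂
        omega
      · exact hle.mul_simple_of_length_lt (by omega)
    · exact ⟨μ₁, hsub.trans (List.sublist_append_left μ [i]), hlen,
        hle.mul_simple_of_isRightDescent (by unfold IsRightDescent; omega)⟩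

theorem isRightDescent_mul_wordProd_iff {ν : List B} {i : B} (h : cs.IsReduced (ν ++ [i]))
    (x : W) : cs.IsRightDescent (x * π ν) i ↔ cs.IsRightInversion x (π ν * s i * (π ν)⁻¹) := by
  have hν : ¬cs.IsRightInversion (π ν) (s i) := fun hν ↦ by
    have h₁ := cs.length_wordProd_le ν
    rw [IsReduced, wordProd_append, wordProd_singleton, List.length_append,
      List.length_singleton] at h
    exact absurd hν.2 (by omega)
  rw [← isRightInversion_simple_iff_isRightDescent,
    cs.isRightInversion_mul_iff (cs.isReflection_simple i) hν]

section Parabolic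

variable (J : Set B)

local notation "W_J" => Subgroup.closure (cs.simple '' J)

theorem wordProd_mem_closure {μ : List B} (hμ : ∀ j ∈ μ, j ∈ J) : π μ ∈ W_J :=
  Subgroup.list_prod_mem _ fun _ hx ↦ by
    obtain ⟨j, hj, rfl⟩ := List.mem_map.mp hx
    exact Subgroup.subset_closure ⟨j, hμ j hj, rfl⟩

theorem exists_reduced_word_of_mem_closure {w : W} (hw : w ∈ W_J) :
    ∃ μ : List B, (∀ j ∈ μ, j ∈ J) ∧ cs.IsReduced μ ∧ π μ = w := by
  suffices ∃ μ : List B, (∀ j ∈ μ, j ∈ J) ∧ π μ = w by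
    obtain ⟨μ, hμJ, rfl⟩ := this
    obtain ⟨μ', hsub, hred, hprod⟩ := cs.exists_reduced_sublist μ
    exact ⟨μ', fun j hj ↦ hμJ j (hsub.subset hj), hred, hprod⟩
  induction hw using Subgroup.closure_induction with
  | mem x hx =>
    obtain ⟨j, hj, rfl⟩ := hx
    exact ⟨[j], by simpa using hj, cs.wordProd_singleton j⟩
  | one => exact ⟨[], by simp, cs.wordProd_nil⟩
  | mul x y _ _ ihx ihy =>
    obtain ⟨μ₁, h₁, rfl⟩ := ihx
    obtain ⟨μ₂, h₂, rfl⟩ := ihy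
    exact ⟨μ₁ ++ μ₂, by simpa [or_imp, forall_and] using ⟨h₁, h₂⟩, cs.wordProd_append μ₁ μ₂⟩
  | inv x _ ih =>
    obtain ⟨μ, hμ, rfl⟩ := ih
    exact ⟨μ.reverse, by simpa using hμ, cs.wordProd_reverse μ⟩

theorem wordProd_mul_simple_mul_inv_mem_closure {ν : List B} {i : B}
    (hJ : ∀ j ∈ ν ++ [i], j ∈ J) : π ν * s i * (π ν)⁻¹ ∈ W_J := by
  have hν := cs.wordProd_mem_closure J fun j hj ↦ hJ j (List.mem_append_left _ hj)
  exact mul_mem (mul_mem hν (Subgroup.subset_closure ⟨i, hJ i (by simp), rfl⟩)) (inv_mem hν)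

theorem length_mul_of_isMinRep {x u : W} (hx : isMinRep cs J x) (hu : u ∈ W_J) :
    ℓ (x * u) = ℓ x + ℓ u := by
  obtain ⟨μ, hμJ, hμ, rfl⟩ := cs.exists_reduced_word_of_mem_closure J hu
  clear hu
  rw [hμ.eq]
  induction μ using List.reverseRecOn with
  | nil => simp
  | append_singleton ν i ih =>
    have hasc : ¬cs.IsRightDescent (x * π ν) i := fun hdesc ↦
      (((cs.isRightDescent_mul_wordProd_iff hμ x).mp hdesc).2).not_ge
        (hx _ (cs.wordProd_mul_simple_mul_inv_mem_closure J hμJ))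
    rw [wordProd_append, wordProd_singleton, ← mul_assoc, List.length_append,
      List.length_singleton, ← add_assoc,
      ← ih (fun j hj ↦ hμJ j (List.mem_append_left _ hj)) (by simpa using hμ.take ν.length)]
    have := cs.length_mul_simple (x * π ν) i
    unfold IsRightDescent at hasc
    omega

theorem length_mul_add_length_of_isMaxRep {a u : W} (ha : isMaxRep cs J a) (hu : u ∈ W_J) :
    ℓ (a * u) + ℓ u = ℓ a := by
  obtain ⟨μ, hμJ, hμ, rfl⟩ := cs.exists_reduced_word_of_mem_closure J hu
  clear hu
  rw [hμ.eq]
  induction μ using List.reverseRecOn with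
  | nil => simp
  | append_singleton ν i ih =>
    have hrefl : cs.IsReflection (π ν * s i * (π ν)⁻¹) := ⟨π ν, i, rfl⟩
    have hdesc : cs.IsRightDescent (a * π ν) i :=
      (cs.isRightDescent_mul_wordProd_iff hμ a).mpr ⟨hrefl, lt_of_le_of_ne
        (ha _ (cs.wordProd_mul_simple_mul_inv_mem_closure J hμJ)) (hrefl.length_mul_left_ne a)⟩
    rw [wordProd_append, wordProd_singleton, ← mul_assoc, List.length_append,
      List.length_singleton, ← add_assoc,
      ← ih (fun j hj ↦ hμJ j (List.mem_append_left _ hj)) (by simpa using hμ.take ν.length)]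
    have := cs.length_mul_simple (a * π ν) i
    unfold IsRightDescent at hdesc
    omega

theorem bruhatChain_mul_of_isMaxRep {a u : W} (ha : isMaxRep cs J a) (hu : u ∈ W_J) :
    cs.BruhatChain (a * u) a := by
  have hlen := cs.length_mul_add_length_of_isMaxRep J ha hu
  simpa using cs.bruhatChain_mul_of_length_mul (x := a * u) (y := u⁻¹)
    (by rw [mul_inv_cancel_right, cs.length_inv, hlen])

theorem isMaxRep_of_isGreatestB {y a : W} (ha : isGreatestB cs {g | ∃ u ∈ W_J, g = y * u} a) :
    isMaxRep cs J a := by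
  obtain ⟨⟨u₀, hu₀, rfl⟩, hgreatest⟩ := ha
  intro u hu
  exact (cs.bruhatLE_iff_bruhatChain.mp
    (hgreatest _ ⟨u₀ * u, mul_mem hu₀ hu, (mul_assoc _ _ _)⟩)).length_le

theorem isGreatestB_of_isMaxRep {y a : W} (ha : isMaxRep cs J a) (hya : y⁻¹ * a ∈ W_J) :
    isGreatestB cs {g | ∃ u ∈ W_J, g = y * u} a := by
  refine ⟨⟨y⁻¹ * a, hya, by group⟩, ?_⟩
  rintro _ ⟨u, hu, rfl⟩
  have h := cs.bruhatChain_mul_of_isMaxRep J ha (mul_mem (inv_mem hya) hu)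
  rw [mul_inv_rev, inv_inv, ← mul_assoc, ← mul_assoc, mul_inv_cancel, one_mul] at h
  exact cs.bruhatLE_iff_bruhatChain.mpr h

theorem length_add_length_inv_mul_of_isMaxRep {a b u : W} (ha : isMaxRep cs J a) (hb : b ∈ W_J)
    (hu : u ∈ W_J) (hlen : ℓ (a * b⁻¹ * u) = ℓ (a * b⁻¹) + ℓ u) : ℓ u + ℓ (u⁻¹ * b) = ℓ b := by
  have h₁ := cs.length_mul_add_length_of_isMaxRep J ha (inv_mem hb)
  have h₂ := cs.length_mul_add_length_of_isMaxRep J ha (mul_mem (inv_mem hb) hu)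
  rw [cs.length_inv] at h₁
  rw [← mul_assoc, hlen, ← cs.length_inv (b⁻¹ * u), mul_inv_rev, inv_inv] at h₂
  omega

theorem mem_Q'Jset_of_mem_QJset {x y a : W} (hxy : (x, y) ∈ QJset cs J)
    (ha : isGreatestB cs {g | ∃ u ∈ W_J, g = y * u} a) : (a, y⁻¹ * a, x) ∈ Q'Jset cs J := by
  obtain ⟨hx, hyx⟩ := hxy
  refine ⟨cs.isMaxRep_of_isGreatestB J ha, ?_⟩
  obtain ⟨⟨u, hu, rfl⟩, -⟩ := ha
  rw [inv_mul_cancel_left]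
  exact ⟨hu, hx, cs.bruhatLE_iff_bruhatChain.mpr
    ((cs.bruhatLE_iff_bruhatChain.mp hyx).mul_right_of_length_mul
      (cs.length_mul_of_isMinRep J hx hu))⟩

theorem mem_QJset_of_mem_Q'Jset {a b c : W} (habc : (a, b, c) ∈ Q'Jset cs J) :
    (c, a * b⁻¹) ∈ QJset cs J := by
  obtain ⟨ha, hb, hc, hacb⟩ := habc
  refine ⟨hc, cs.bruhatLE_iff_bruhatChain.mpr ?_⟩
  have hcb := cs.length_mul_of_isMinRep J hc hb
  simpa using (cs.bruhatLE_iff_bruhatChain.mp hacb).mul_right_of_length_mul_add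
    (cs.length_mul_add_length_of_isMaxRep J ha (inv_mem hb))
    (by rw [mul_inv_cancel_right, cs.length_inv, hcb])

theorem leQ'_of_preceq {x' y' a' x y a : W} (hxy' : (x', y') ∈ QJset cs J)
    (ha' : isGreatestB cs {g | ∃ u ∈ W_J, g = y' * u} a')
    (h : preceq cs J (x', y') (x, y)) : leQ' cs J (a', y'⁻¹ * a', x') (a, y⁻¹ * a, x) := by
  obtain ⟨hx', hy'x'⟩ := hxy'
  obtain ⟨u, hu, hx'u, hyu⟩ := h
  have ha'max := cs.isMaxRep_of_isGreatestB J ha'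
  obtain ⟨⟨u₀, hu₀, rfl⟩, -⟩ := ha'
  rw [inv_mul_cancel_left]
  obtain ⟨μ, hμJ, hμ, rfl⟩ := cs.exists_reduced_word_of_mem_closure J hu
  -- `u₁ := π μ₁` is the part of `π μ` that can be absorbed by `y'` without cancellation.
  obtain ⟨μ₁, hsub, hlen, hle⟩ := cs.exists_sublist_length_mul_eq_and_bruhatChain y' μ
  have hu₁ : π μ₁ ∈ W_J := cs.wordProd_mem_closure J fun j hj ↦ hμJ j (hsub.subset hj)
  refine ⟨π μ₁, hu₁, (π μ₁)⁻¹ * u₀, mul_mem (inv_mem hu₁) hu₀, by group, ?_, ?_, ?_, ?_⟩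
  · exact cs.length_add_length_inv_mul_of_isMaxRep J ha'max hu₀ hu₁ (by simpa using hlen)
  · rw [show a * (y⁻¹ * a)⁻¹ = y by group, show y' * u₀ * ((π μ₁)⁻¹ * u₀)⁻¹ = y' * π μ₁ by group,
      cs.bruhatLE_iff_bruhatChain]
    exact (cs.bruhatLE_iff_bruhatChain.mp hyu).trans hle
  · rw [show y' * u₀ * ((π μ₁)⁻¹ * u₀)⁻¹ = y' * π μ₁ by group, cs.bruhatLE_iff_bruhatChain]
    exact (cs.bruhatLE_iff_bruhatChain.mp hy'x').mul_right_of_length_mul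
      (cs.length_mul_of_isMinRep J hx' hu₁)
  · rw [cs.bruhatLE_iff_bruhatChain]
    exact ((cs.bruhatChain_wordProd_of_sublist hμ hsub).mul_left_of_length_mul
      (cs.length_mul_of_isMinRep J hx' hu)).trans (cs.bruhatLE_iff_bruhatChain.mp hx'u)

end Parabolic

end CoxeterSystem

theorem isGreatestB.unique {B W : Type*} [Group W] {M : CoxeterMatrix B}
    {cs : CoxeterSystem M W} {S : Set W} {m m' : W} (hm : isGreatestB cs S m)
    (hm' : isGreatestB cs S m') : m = m' :=
  (cs.bruhatLE_iff_bruhatChain.mp (hm'.2 m hm.1)).antisymm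
    (cs.bruhatLE_iff_bruhatChain.mp (hm.2 m' hm'.1))

theorem h_order_preserving_bijection_general {B W : Type*} [Group W]
    {M : CoxeterMatrix B} (cs : CoxeterSystem M W) (J : Set B)
    (h : W × W → W × W × W)
    (hh : ∀ p : W × W,
      isGreatestB cs {g | ∃ u ∈ Subgroup.closure (cs.simple '' J), g = p.2 * u} (h p).1 ∧
      (h p).2.1 = p.2⁻¹ * (h p).1 ∧ (h p).2.2 = p.1) :
    Set.BijOn h (QJset cs J) (Q'Jset cs J) ∧
    ∀ p ∈ QJset cs J, ∀ q ∈ QJset cs J, preceq cs J p q → leQ' cs J (h p) (h q) := by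
  have hh' (p : W × W) : h p = ((h p).1, p.2⁻¹ * (h p).1, p.1) := by
    rw [← (hh p).2.1, ← (hh p).2.2]
  refine ⟨⟨fun p hp ↦ ?_, fun p _ q _ hpq ↦ ?_, fun ⟨a, b, c⟩ habc ↦ ?_⟩, ?_⟩
  · rw [hh' p]
    exact cs.mem_Q'Jset_of_mem_QJset J hp (hh p).1
  · rw [hh' p, hh' q, Prod.mk.injEq, Prod.mk.injEq] at hpq
    obtain ⟨ha, hb, hc⟩ := hpq
    rw [ha, mul_left_inj, inv_inj] at hb
    exact Prod.ext hc hb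
  · refine ⟨(c, a * b⁻¹), cs.mem_QJset_of_mem_Q'Jset J habc, ?_⟩
    have ha : (h (c, a * b⁻¹)).1 = a := (hh _).1.unique
      (cs.isGreatestB_of_isMaxRep J habc.1 (by simpa using habc.2.1))
    rw [hh', ha]
    simp
  · rintro ⟨x', y'⟩ hp ⟨x, y⟩ - hpq
    rw [hh' (x', y'), hh' (x, y)]
    exact cs.leQ'_of_preceq J hp (hh _).1 hpq

/-- The map `h : Q_J → Q'_J`, `(x,y) ↦ (max(yW_J), y⁻¹ max(yW_J), x)` is an
order-preserving bijection between `(Q_J, ⪯)` and `(Q'_J, ≤)`. -/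
theorem h_order_preserving_bijection {B W : Type*} [Group W] [Finite W]
    {M : CoxeterMatrix B} (cs : CoxeterSystem M W) (J : Set B)
    (h : W × W → W × W × W)
    (hh : ∀ p : W × W,
      isGreatestB cs {g | ∃ u ∈ Subgroup.closure (cs.simple '' J), g = p.2 * u} (h p).1 ∧
      (h p).2.1 = p.2⁻¹ * (h p).1 ∧ (h p).2.2 = p.1) :
    Set.BijOn h (QJset cs J) (Q'Jset cs J) ∧
    ∀ p ∈ QJset cs J, ∀ q ∈ QJset cs J, preceq cs J p q → leQ' cs J (h p) (h q) :=
  h_order_preserving_bijection_general cs J h hh
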